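/- arXiv:1010.2550 — 3 statements merged into one kernel-verified Lean document; each statement's English description precedes it below -/
import Mathlib

section
/- Let Lambda be a free abelian group of rank 2k with basis h_1, …, h_{2k} equipped with a skew-symmetric bilinear pairing · which is unimodular (nondegenerate with the induced map Lambda → Hom(Lambda, Z) an isomorphism). Let Ghat be the group of pairs (m, h) in (1/2)Z × Lambda with multiplication (m,h)·(m',h') = (m + m' + h·h', h + h'), let lambda = (1,0) and gamma_i = (-1/2, h_i), and let G be the subgroup of Ghat generated by lambda and gamma_1, …, gamma_{2k}. Then for each i, the automorphism psi of G determined by psi(lambda) = lambda, psi(gamma_i) = lambda^2·gamma_i, and psi(gamma_j) = gamma_j for all j ≠ i, is an inner automorphism of G. -/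
/-!
Conjugation by an element `(m, y)` of `Ĝ` fixes the second coordinate and shifts the first by
`2 (y · h)`, so it fixes `λ` and sends `γⱼ` to `λ^(2 (y · hⱼ)) γⱼ`. By unimodularity there is a
`y` with `y · hⱼ = δᵢⱼ`, and since the `hⱼ` form a basis, some element of `G` has second
coordinate `y`. Conjugation by that element agrees with `ψ` on the generators of `G`.
-/

def IsTwistedProductEquiv {Λ Ghat : Type*} [AddCommGroup Λ] [Group Ghat]
    (B : Λ →ₗ[ℤ] Λ →ₗ[ℤ] ℤ) (e : ℚ × Λ ≃ Ghat) : Prop :=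
  ∀ p q : ℚ × Λ, e p * e q = e (p.1 + q.1 + ((B p.2 q.2 : ℤ) : ℚ), p.2 + q.2)

namespace IsTwistedProductEquiv

variable {Λ Ghat : Type*} [AddCommGroup Λ] [Group Ghat] {B : Λ →ₗ[ℤ] Λ →ₗ[ℤ] ℤ}
  {e : ℚ × Λ ≃ Ghat} (he : IsTwistedProductEquiv B e)
include he

theorem map_zero : e 0 = 1 := by
  simpa [Prod.mk_zero_zero] using he 0 0

theorem mul_apply_symm (a b : Ghat) :
    a * b = e ((e.symm a).1 + (e.symm b).1 + ((B (e.symm a).2 (e.symm b).2 : ℤ) : ℚ),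
      (e.symm a).2 + (e.symm b).2) := by
  rw [← he, e.apply_symm_apply, e.apply_symm_apply]

def sndHom : Ghat →* Multiplicative Λ where
  toFun a := .ofAdd (e.symm a).2
  map_one' := by rw [← he.map_zero, e.symm_apply_apply]; rfl
  map_mul' a b := by rw [he.mul_apply_symm a b, e.symm_apply_apply]; rfl

theorem inv_apply (hB : B.IsAlt) (m : ℚ) (y : Λ) : (e (m, y))⁻¹ = e (-m, -y) := by
  refine inv_eq_of_mul_eq_one_right ?_
  rw [he, ← he.map_zero, map_neg, hB.self_eq_zero]
  simp

theorem conj_apply (hB : B.IsAlt) {g : Ghat} {y : Λ} (hg : (e.symm g).2 = y) (p : ℚ × Λ) :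
    g * e p * g⁻¹ = e (p.1 + 2 * ((B y p.2 : ℤ) : ℚ), p.2) := by
  obtain ⟨m, rfl⟩ : ∃ m, g = e (m, y) :=
    ⟨(e.symm g).1, by rw [← hg, Prod.mk.eta, e.apply_symm_apply]⟩
  have hskew : B (y + p.2) (-y) = B y p.2 := by
    rw [map_neg, map_add, LinearMap.add_apply, hB.self_eq_zero, ← hB.neg p.2 y]
    ring
  rw [he.inv_apply hB, he, he, hskew]
  refine congrArg e (Prod.ext ?_ (add_neg_cancel_comm y p.2))
  ring

theorem exists_mem_snd_eq {ι : Type*} (b : Module.Basis ι ℤ Λ) {γ : ι → Ghat}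
    (hγ : ∀ j, (e.symm (γ j)).2 = b j) {G : Subgroup Ghat} (hγG : ∀ j, γ j ∈ G) (y : Λ) :
    ∃ g ∈ G, (e.symm g).2 = y := by
  have hspan : Submodule.span ℤ (Set.range b) ≤
      AddSubgroup.toIntSubmodule (Subgroup.toAddSubgroup' (G.map he.sndHom)) :=
    Submodule.span_le.2 <| Set.range_subset_iff.2 fun j =>
      ⟨γ j, hγG j, congrArg Multiplicative.ofAdd (hγ j)⟩
  obtain ⟨g, hgG, hg⟩ := hspan (b.mem_span y)
  exact ⟨g, hgG, congrArg Multiplicative.toAdd hg⟩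

end IsTwistedProductEquiv

theorem MonoidHom.eq_of_eqOn_closure {G M : Type*} [Group G] [Monoid M] {s : Set G}
    {f g : Subgroup.closure s →* M}
    (h : ∀ x (hx : x ∈ s),
      f ⟨x, Subgroup.subset_closure hx⟩ = g ⟨x, Subgroup.subset_closure hx⟩) :
    f = g :=
  MonoidHom.eq_of_eqOn_dense Subgroup.closure_closure_coe_preimage fun x hx => h x hx

theorem statement16 (k : ℕ) {Λ : Type*} [AddCommGroup Λ]
    (bΛ : Module.Basis (Fin (2 * k)) ℤ Λ)
    (B : Λ →ₗ[ℤ] Λ →ₗ[ℤ] ℤ)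
    (skew : ∀ x y : Λ, B x y = - B y x)
    (unimod : Function.Bijective (fun x => (B x : Λ →ₗ[ℤ] ℤ)))
    -- the group `Ĝ` of pairs `(m, h)` with the twisted multiplication
    {Ghat : Type*} [Group Ghat] (e : ℚ × Λ ≃ Ghat)
    (he : ∀ p q : ℚ × Λ,
      e p * e q = e (p.1 + q.1 + ((B p.2 q.2 : ℤ) : ℚ), p.2 + q.2))
    -- the distinguished elements and the subgroup they generate
    (lam : Ghat) (hlam : lam = e (1, 0))
    (γ : Fin (2 * k) → Ghat) (hγ : ∀ i, γ i = e (-(1/2 : ℚ), bΛ i))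
    (G : Subgroup Ghat) (hG : G = Subgroup.closure ({lam} ∪ Set.range γ))
    (hlamG : lam ∈ G) (hγG : ∀ i, γ i ∈ G)
    -- `ψ` is the endomorphism of `G` determined by the values below
    (i : Fin (2 * k)) (ψ : G →* G)
    (hψlam : ψ ⟨lam, hlamG⟩ = ⟨lam, hlamG⟩)
    (hψi : ψ ⟨γ i, hγG i⟩ = ⟨lam, hlamG⟩ ^ 2 * ⟨γ i, hγG i⟩)
    (hψj : ∀ j, j ≠ i → ψ ⟨γ j, hγG j⟩ = ⟨γ j, hγG j⟩) :
    -- conclusion: `ψ` is an inner automorphism of `G`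
    ∃ g : G, ∀ x : G, ψ x = g * x * g⁻¹ := by
  have he : IsTwistedProductEquiv B e := he
  have hB : B.IsAlt := fun x => by have := skew x x; omega
  obtain ⟨y, hy⟩ := unimod.2 (bΛ.coord i)
  have hyb : ∀ j, ((B y (bΛ j) : ℤ) : ℚ) = if j = i then 1 else 0 := fun j => by
    simp [show B y = bΛ.coord i from hy, Finsupp.single_apply, eq_comm]
  obtain ⟨g, hgG, hg⟩ := he.exists_mem_snd_eq bΛ (by simp [hγ]) hγG y
  have hconj := he.conj_apply hB hg
  subst hG hlam
  suffices ψ = (MulAut.conj ⟨g, hgG⟩).toMonoidHom from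
    ⟨⟨g, hgG⟩, fun x => by rw [this]; rfl⟩
  refine MonoidHom.eq_of_eqOn_closure fun a ha => Subtype.ext ?_
  obtain rfl | ⟨j, rfl⟩ := ha
  · rw [hψlam]
    show e (1, 0) = g * e (1, 0) * g⁻¹
    simp [hconj]
  by_cases hji : j = i
  · subst hji
    rw [hψi]
    show e (1, 0) ^ 2 * γ j = g * γ j * g⁻¹
    rw [sq, hγ, he, he, hconj, hyb, if_pos rfl]
    norm_num
  · rw [hψj j hji]
    show γ j = g * γ j * g⁻¹
    simp [hγ, hconj, hyb, hji]
end

section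
/- Let Z1 and Z2 be pointed matched circles of genus k, with grading groups G(Z1) and G(Z2) as above, and let Upsilon_t : G(Z_t) → G_{Z/2}(Z_t) := (Z/2) × H_1(F(Z_t)) be the group homomorphisms determined by Upsilon_t(lambda) = (1,0) and Upsilon_t(gamma(B_i)) = (0, h(B_i)). Suppose phi : G(Z1) → G(Z2) is a group isomorphism with phi(lambda) = lambda. Then: (1) phi descends to an isomorphism phibar : G_{Z/2}(Z1) → G_{Z/2}(Z2), i.e. Upsilon_2 ∘ phi = phibar ∘ Upsilon_1; and (2) as an outer isomorphism satisfying phi(lambda) = lambda, phi is determined by phibar: if phi' is another isomorphism with phi'(lambda) = lambda inducing the same map phibar, then phi and phi' differ by an inner automorphism. -/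
/-!
In `Ĝ`, the element `λ = (1, 0)` is central and conjugation by `w = (m, g)` multiplies
`γ(Bᵢ)` by `λ^(2 B(g, h(Bᵢ)))`. The kernel of `Υ` is generated by `λ²`: an element of `G(Z)`
with trivial homology class is `(m, 0)`, and `m ∈ ℤ` because `(m, h) ↦ m + ε(h)/2 mod ℤ`, with
`ε(h(Bᵢ)) = 1`, is a homomorphism vanishing on the generators. So an isomorphism fixing `λ`
matches the kernels of the `Υₜ` and descends, which is (1). For (2), `φ⁻¹φ'` fixes `λ` and
induces the identity, so it sends `γ(Bᵢ)` to `λ^(2mᵢ) γ(Bᵢ)`; by unimodularity some `g` has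
`B(g, h(Bᵢ)) = mᵢ`, and conjugation by any element of `G(Z)` over `g` agrees with `φ⁻¹φ'`.
-/

open Multiplicative

theorem MulEquiv.exists_comp_eq_of_map_ker {G₁ G₂ H₁ H₂ : Type*} [Group G₁] [Group G₂]
    [Group H₁] [Group H₂] {f₁ : G₁ →* H₁} {f₂ : G₂ →* H₂}
    (hf₁ : Function.Surjective f₁) (hf₂ : Function.Surjective f₂) (φ : G₁ ≃* G₂)
    (hker : f₁.ker.map φ.toMonoidHom = f₂.ker) :
    ∃ ψ : H₁ ≃* H₂, ∀ x, f₂ (φ x) = ψ (f₁ x) := by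
  refine ⟨(QuotientGroup.quotientKerEquivOfSurjective f₁ hf₁).symm.trans
    ((QuotientGroup.congr _ _ φ hker).trans
      (QuotientGroup.quotientKerEquivOfSurjective f₂ hf₂)), fun x => ?_⟩
  have hx : (QuotientGroup.quotientKerEquivOfSurjective f₁ hf₁).symm (f₁ x) = x := by
    rw [MulEquiv.symm_apply_eq]; rfl
  rw [MulEquiv.trans_apply, hx]
  rfl

theorem Module.Basis.addSubgroupClosure_range_eq_top {ι M : Type*} [AddCommGroup M]
    (b : Module.Basis ι ℤ M) : AddSubgroup.closure (Set.range b) = ⊤ := by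
  rw [← Submodule.span_int_eq_addSubgroupClosure, b.span_eq, Submodule.top_toAddSubgroup]

section

variable {ι Λ Ghat : Type*} [AddCommGroup Λ] [Group Ghat]

def IsTwistedChart (B : Λ →ₗ[ℤ] Λ →ₗ[ℤ] ℤ) (e : ℚ × Λ ≃ Ghat) : Prop :=
  ∀ p q : ℚ × Λ, e p * e q = e (p.1 + q.1 + ((B p.2 q.2 : ℤ) : ℚ), p.2 + q.2)

namespace IsTwistedChart

variable {B : Λ →ₗ[ℤ] Λ →ₗ[ℤ] ℤ} {e : ℚ × Λ ≃ Ghat}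

theorem apply_zero (he : IsTwistedChart B e) : e (0, 0) = 1 :=
  mul_eq_left.1 (by rw [he (0, 0) (0, 0)]; simp)

theorem symm_mul (he : IsTwistedChart B e) (x y : Ghat) :
    e.symm (x * y) = ((e.symm x).1 + (e.symm y).1 + ((B (e.symm x).2 (e.symm y).2 : ℤ) : ℚ),
      (e.symm x).2 + (e.symm y).2) := by
  rw [e.symm_apply_eq, ← he, e.apply_symm_apply, e.apply_symm_apply]

def sndHom (he : IsTwistedChart B e) : Ghat →* Multiplicative Λ where
  toFun x := ofAdd (e.symm x).2
  map_one' := by rw [← he.apply_zero, e.symm_apply_apply]; rfl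
  map_mul' x y := by rw [he.symm_mul]; rfl

def centralHom (he : IsTwistedChart B e) : Multiplicative ℚ →* Ghat where
  toFun q := e (q.toAdd, 0)
  map_one' := he.apply_zero
  map_mul' a b := by rw [he]; simp

theorem apply_zpow (he : IsTwistedChart B e) (m : ℚ) (n : ℤ) : e (m, 0) ^ n = e (n * m, 0) := by
  simpa [centralHom, ← zsmul_eq_mul] using (map_zpow he.centralHom (ofAdd m) n).symm

theorem commute_apply_fst (he : IsTwistedChart B e) (m : ℚ) (x : Ghat) : Commute (e (m, 0)) x := by
  rw [← e.apply_symm_apply x, Commute, SemiconjBy, he, he]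
  simp [add_comm]

theorem conj_eq (he : IsTwistedChart B e) (skew : ∀ x y, B x y = - B y x) (x y : Ghat) :
    x * y * x⁻¹ = e (2 * B (e.symm x).2 (e.symm y).2, 0) * y := by
  rw [mul_inv_eq_iff_eq_mul, mul_assoc]
  apply e.symm.injective
  rw [he.symm_mul, he.symm_mul, he.symm_mul, e.symm_apply_apply, skew (e.symm y).2]
  ext <;> simp only [map_zero, LinearMap.zero_apply, zero_add]
  · push_cast; ring
  · abel

def fstModOneHom (he : IsTwistedChart B e) (ε : Λ →ₗ[ℤ] ℤ) :
    Ghat →* Multiplicative (ℚ ⧸ AddSubgroup.zmultiples (1 : ℚ)) where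
  toFun x := ofAdd (((e.symm x).1 + (ε (e.symm x).2 : ℚ) / 2 : ℚ) : ℚ ⧸ _)
  map_one' := by simp [← he.apply_zero]
  map_mul' x y := by
    rw [he.symm_mul, ← ofAdd_add, ← QuotientAddGroup.mk_add]
    congr 1
    rw [QuotientAddGroup.eq_iff_sub_mem]
    convert AddSubgroup.intCast_mem_zmultiples_one (B (e.symm x).2 (e.symm y).2) using 1
    rw [map_add]
    push_cast
    ring

end IsTwistedChart

def gradingGroup (e : ℚ × Λ ≃ Ghat) (b : Module.Basis ι ℤ Λ) : Subgroup Ghat :=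
  Subgroup.closure ({e (1, 0)} ∪ Set.range fun i => e (-(1/2 : ℚ), b i))

namespace gradingGroup

variable (e : ℚ × Λ ≃ Ghat) (b : Module.Basis ι ℤ Λ)

def lambda : gradingGroup e b := ⟨e (1, 0), Subgroup.subset_closure (Or.inl rfl)⟩

noncomputable def gamma (i : ι) : gradingGroup e b :=
  ⟨e (-(1/2 : ℚ), b i), Subgroup.subset_closure (Or.inr ⟨i, rfl⟩)⟩

variable {e b}

theorem hom_ext {M : Type*} [Monoid M] {f g : gradingGroup e b →* M}
    (hlambda : f (lambda e b) = g (lambda e b)) (hgamma : ∀ i, f (gamma e b i) = g (gamma e b i)) :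
    f = g :=
  MonoidHom.eq_of_eqOn_dense Subgroup.closure_closure_coe_preimage <| by
    rintro ⟨x, hx⟩ (rfl | ⟨i, rfl⟩)
    exacts [hlambda, hgamma i]

variable {B : Λ →ₗ[ℤ] Λ →ₗ[ℤ] ℤ}

theorem exists_snd_eq (he : IsTwistedChart B e) (h : Λ) :
    ∃ w : gradingGroup e b, (e.symm w).2 = h := by
  suffices AddSubgroup.closure (Set.range b) ≤
      ((gradingGroup e b).map he.sndHom).toAddSubgroup' by
    rw [b.addSubgroupClosure_range_eq_top] at this
    obtain ⟨w, hw, hwh⟩ := this (AddSubgroup.mem_top h)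
    exact ⟨⟨w, hw⟩, hwh⟩
  rw [AddSubgroup.closure_le]
  rintro _ ⟨i, rfl⟩
  exact ⟨_, (gamma e b i).2, by simp [IsTwistedChart.sndHom, gamma]; rfl⟩

theorem exists_eq_lambda_zpow (he : IsTwistedChart B e) {x : gradingGroup e b}
    (hx : (e.symm x).2 = 0) : ∃ n : ℤ, x = lambda e b ^ n := by
  have hle : gradingGroup e b ≤ (he.fstModOneHom (b.constr ℤ fun _ => 1)).ker := by
    refine Subgroup.closure_le _ |>.2 ?_
    rintro _ (rfl | ⟨i, rfl⟩) <;> simp [IsTwistedChart.fstModOneHom]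
  have hfrac := hle x.2
  simp only [MonoidHom.mem_ker, IsTwistedChart.fstModOneHom, MonoidHom.coe_mk, OneHom.coe_mk, hx,
    map_zero, Int.cast_zero, zero_div, add_zero] at hfrac
  obtain ⟨n, hn⟩ := AddSubgroup.mem_zmultiples_iff.1 ((QuotientAddGroup.eq_zero_iff _).1 hfrac)
  refine ⟨n, Subtype.ext ?_⟩
  rw [Subgroup.coe_zpow, lambda, he.apply_zpow, ← e.apply_symm_apply x]
  congr 1
  ext <;> simp [hx, ← hn]

end gradingGroup

open gradingGroup

structure IsMod2Reduction {e : ℚ × Λ ≃ Ghat} {b : Module.Basis ι ℤ Λ}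
    (Υ : gradingGroup e b →* Multiplicative (ZMod 2 × Λ)) : Prop where
  map_lambda : Υ (lambda e b) = ofAdd (1, 0)
  map_gamma : ∀ i, Υ (gamma e b i) = ofAdd (0, b i)

namespace IsMod2Reduction

variable {B : Λ →ₗ[ℤ] Λ →ₗ[ℤ] ℤ} {e : ℚ × Λ ≃ Ghat} {b : Module.Basis ι ℤ Λ}
  {Υ : gradingGroup e b →* Multiplicative (ZMod 2 × Λ)}

theorem snd_toAdd (hΥ : IsMod2Reduction Υ) (he : IsTwistedChart B e) (x : gradingGroup e b) :
    (toAdd (Υ x)).2 = (e.symm x).2 := by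
  have hsnd : (AddMonoidHom.snd (ZMod 2) Λ).toMultiplicative.comp Υ =
      he.sndHom.comp (gradingGroup e b).subtype :=
    hom_ext (by rw [MonoidHom.comp_apply, hΥ.map_lambda]; simp [IsTwistedChart.sndHom, lambda])
      (fun i => by rw [MonoidHom.comp_apply, hΥ.map_gamma]; simp [IsTwistedChart.sndHom, gamma])
  exact congrArg toAdd (DFunLike.congr_fun hsnd x)

theorem surjective (hΥ : IsMod2Reduction Υ) : Function.Surjective Υ := by
  let S := Υ.range.toAddSubgroup'
  have hinl (a : ZMod 2) : (a, (0 : Λ)) ∈ S := by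
    fin_cases a
    exacts [S.zero_mem, ⟨lambda e b, hΥ.map_lambda⟩]
  have hinr (h : Λ) : ((0 : ZMod 2), h) ∈ S := by
    suffices AddSubgroup.closure (Set.range b) ≤ S.comap (AddMonoidHom.inr (ZMod 2) Λ) by
      rw [b.addSubgroupClosure_range_eq_top] at this
      exact this (AddSubgroup.mem_top h)
    rw [AddSubgroup.closure_le]
    rintro _ ⟨i, rfl⟩
    exact ⟨gamma e b i, hΥ.map_gamma i⟩
  intro t
  change toAdd t ∈ S
  rw [← Prod.fst_add_snd (toAdd t)]
  exact S.add_mem (hinl _) (hinr _)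

theorem ker_eq_zpowers (hΥ : IsMod2Reduction Υ) (he : IsTwistedChart B e) :
    Υ.ker = Subgroup.zpowers (lambda e b ^ 2) := by
  refine le_antisymm (fun x hx => ?_) (Subgroup.zpowers_le.2 ?_)
  · obtain ⟨n, rfl⟩ := exists_eq_lambda_zpow he (b := b) (by rw [← hΥ.snd_toAdd he, hx]; rfl)
    rw [MonoidHom.mem_ker, map_zpow, hΥ.map_lambda, ← ofAdd_zsmul, ofAdd_eq_one, Prod.smul_mk,
      zsmul_one, Prod.mk_eq_zero, ZMod.intCast_zmod_eq_zero_iff_dvd] at hx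
    obtain ⟨k, rfl⟩ := hx.1
    exact ⟨k, by simp only [← zpow_natCast, ← zpow_mul, Nat.cast_ofNat]⟩
  · rw [MonoidHom.mem_ker, map_pow, hΥ.map_lambda, ← ofAdd_nsmul, ofAdd_eq_one]
    ext
    · exact two_nsmul (1 : ZMod 2)
    · simp

theorem exists_eq_conj (hΥ : IsMod2Reduction Υ) (he : IsTwistedChart B e)
    (skew : ∀ x y, B x y = - B y x) (hB : Function.Surjective B)
    (κ : gradingGroup e b →* gradingGroup e b) (hκlambda : κ (lambda e b) = lambda e b)
    (hκΥ : ∀ y, Υ (κ y) = Υ y) : ∃ w, ∀ y, κ y = w * y * w⁻¹ := by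
  have hgamma (i : ι) : ∃ m : ℤ, κ (gamma e b i) = lambda e b ^ (2 * m) * gamma e b i := by
    have hker : κ (gamma e b i) * (gamma e b i)⁻¹ ∈ Υ.ker := by
      rw [MonoidHom.mem_ker, map_mul, map_inv, hκΥ, mul_inv_cancel]
    obtain ⟨m, hm : (lambda e b ^ 2) ^ m = _⟩ := hΥ.ker_eq_zpowers he ▸ hker
    refine ⟨m, ?_⟩
    rw [zpow_mul, zpow_ofNat, hm, inv_mul_cancel_right]
  choose m hm using hgamma
  obtain ⟨g, hg⟩ := hB (b.constr ℤ m)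
  obtain ⟨w, hw⟩ := exists_snd_eq (b := b) he g
  refine ⟨w, fun y => DFunLike.congr_fun (hom_ext (f := κ) (g := (MulAut.conj w).toMonoidHom)
    ?_ fun i => ?_) y⟩
  · have hcomm : Commute w (lambda e b) := Subtype.ext (he.commute_apply_fst 1 w).eq.symm
    rw [hκlambda, MulEquiv.coe_toMonoidHom, MulAut.conj_apply, hcomm.mul_inv_cancel]
  · have hBg : B g (b i) = m i := by rw [hg, b.constr_basis]
    rw [hm i, MulEquiv.coe_toMonoidHom, MulAut.conj_apply]
    refine Subtype.ext ?_
    simp only [Subgroup.coe_mul, Subgroup.coe_inv, Subgroup.coe_zpow]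
    rw [he.conj_eq skew, hw, gamma, e.symm_apply_apply, hBg, lambda, he.apply_zpow]
    push_cast
    ring_nf

end IsMod2Reduction

end

theorem statement17_general (k : ℕ)
    {Λ1 Λ2 : Type*} [AddCommGroup Λ1] [AddCommGroup Λ2]
    (b1 : Module.Basis (Fin (2 * k)) ℤ Λ1) (b2 : Module.Basis (Fin (2 * k)) ℤ Λ2)
    (B1 : Λ1 →ₗ[ℤ] Λ1 →ₗ[ℤ] ℤ) (B2 : Λ2 →ₗ[ℤ] Λ2 →ₗ[ℤ] ℤ)
    (skew2 : ∀ x y, B2 x y = - B2 y x)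
    (unimod2 : Function.Bijective (fun x => (B2 x : Λ2 →ₗ[ℤ] ℤ)))
    {Ghat1 Ghat2 : Type*} [Group Ghat1] [Group Ghat2]
    (e1 : ℚ × Λ1 ≃ Ghat1) (e2 : ℚ × Λ2 ≃ Ghat2)
    (he1 : ∀ p q : ℚ × Λ1,
      e1 p * e1 q = e1 (p.1 + q.1 + ((B1 p.2 q.2 : ℤ) : ℚ), p.2 + q.2))
    (he2 : ∀ p q : ℚ × Λ2,
      e2 p * e2 q = e2 (p.1 + q.1 + ((B2 p.2 q.2 : ℤ) : ℚ), p.2 + q.2))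
    (lam1 : Ghat1) (hlam1 : lam1 = e1 (1, 0))
    (lam2 : Ghat2) (hlam2 : lam2 = e2 (1, 0))
    (γ1 : Fin (2 * k) → Ghat1) (hγ1 : ∀ i, γ1 i = e1 (-(1/2 : ℚ), b1 i))
    (γ2 : Fin (2 * k) → Ghat2) (hγ2 : ∀ i, γ2 i = e2 (-(1/2 : ℚ), b2 i))
    (G1 : Subgroup Ghat1) (hG1 : G1 = Subgroup.closure ({lam1} ∪ Set.range γ1))
    (G2 : Subgroup Ghat2) (hG2 : G2 = Subgroup.closure ({lam2} ∪ Set.range γ2))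
    (hlam1G : lam1 ∈ G1) (hγ1G : ∀ i, γ1 i ∈ G1)
    (hlam2G : lam2 ∈ G2) (hγ2G : ∀ i, γ2 i ∈ G2)
    -- the homomorphisms `Υₜ` to `G_{ℤ/2}(Zₜ) = (ℤ/2) × Λₜ`
    (Υ1 : G1 →* Multiplicative (ZMod 2 × Λ1))
    (Υ2 : G2 →* Multiplicative (ZMod 2 × Λ2))
    (hΥ1lam : Υ1 ⟨lam1, hlam1G⟩ = Multiplicative.ofAdd ((1, 0) : ZMod 2 × Λ1))
    (hΥ1γ : ∀ i, Υ1 ⟨γ1 i, hγ1G i⟩ = Multiplicative.ofAdd ((0, b1 i) : ZMod 2 × Λ1))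
    (hΥ2lam : Υ2 ⟨lam2, hlam2G⟩ = Multiplicative.ofAdd ((1, 0) : ZMod 2 × Λ2))
    (hΥ2γ : ∀ i, Υ2 ⟨γ2 i, hγ2G i⟩ = Multiplicative.ofAdd ((0, b2 i) : ZMod 2 × Λ2))
    -- the isomorphism `φ` with `φ(λ) = λ`
    (φ : G1 ≃* G2) (hφlam : φ ⟨lam1, hlam1G⟩ = ⟨lam2, hlam2G⟩) :
    -- (1) `φ` descends to an isomorphism `φ̄` of the `G_{ℤ/2}`'s
    (∃ φbar : ZMod 2 × Λ1 ≃+ ZMod 2 × Λ2,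
      ∀ x : G1, Multiplicative.toAdd (Υ2 (φ x)) = φbar (Multiplicative.toAdd (Υ1 x))) ∧
    -- (2) `φ` is determined, up to inner automorphisms, by the induced map
    (∀ φ' : G1 ≃* G2, φ' ⟨lam1, hlam1G⟩ = ⟨lam2, hlam2G⟩ →
      (∀ x : G1, Υ2 (φ x) = Υ2 (φ' x)) →
      ∃ g : G2, ∀ x : G1, φ' x = g * φ x * g⁻¹) := by
  subst hlam1 hlam2
  obtain rfl : γ1 = _ := funext hγ1
  obtain rfl : γ2 = _ := funext hγ2
  obtain rfl : G1 = gradingGroup e1 b1 := hG1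
  obtain rfl : G2 = gradingGroup e2 b2 := hG2
  have hΥ1 : IsMod2Reduction Υ1 := ⟨hΥ1lam, hΥ1γ⟩
  have hΥ2 : IsMod2Reduction Υ2 := ⟨hΥ2lam, hΥ2γ⟩
  have hφ : φ (gradingGroup.lambda e1 b1) = gradingGroup.lambda e2 b2 := hφlam
  refine ⟨?_, fun φ' hφ'lam hφφ' => ?_⟩
  · have hker : Υ1.ker.map φ.toMonoidHom = Υ2.ker := by
      rw [hΥ1.ker_eq_zpowers he1, hΥ2.ker_eq_zpowers he2, MonoidHom.map_zpowers, map_pow,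
        MulEquiv.coe_toMonoidHom, hφ]
    obtain ⟨ψ, hψ⟩ := φ.exists_comp_eq_of_map_ker hΥ1.surjective hΥ2.surjective hker
    exact ⟨AddEquiv.toMultiplicative.symm ψ, fun x => congrArg toAdd (hψ x)⟩
  · obtain ⟨w, hw⟩ := hΥ2.exists_eq_conj he2 skew2 unimod2.2 (φ.symm.trans φ').toMonoidHom
      (by rw [MulEquiv.coe_toMonoidHom, MulEquiv.trans_apply, φ.symm_apply_eq.2 hφ.symm]
          exact hφ'lam)
      (fun y => by simp [← hφφ'])
    exact ⟨w, fun x => by simpa using hw (φ x)⟩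

theorem statement17 (k : ℕ)
    {Λ1 Λ2 : Type*} [AddCommGroup Λ1] [AddCommGroup Λ2]
    (b1 : Module.Basis (Fin (2 * k)) ℤ Λ1) (b2 : Module.Basis (Fin (2 * k)) ℤ Λ2)
    (B1 : Λ1 →ₗ[ℤ] Λ1 →ₗ[ℤ] ℤ) (B2 : Λ2 →ₗ[ℤ] Λ2 →ₗ[ℤ] ℤ)
    (skew1 : ∀ x y, B1 x y = - B1 y x) (skew2 : ∀ x y, B2 x y = - B2 y x)
    (unimod1 : Function.Bijective (fun x => (B1 x : Λ1 →ₗ[ℤ] ℤ)))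
    (unimod2 : Function.Bijective (fun x => (B2 x : Λ2 →ₗ[ℤ] ℤ)))
    {Ghat1 Ghat2 : Type*} [Group Ghat1] [Group Ghat2]
    (e1 : ℚ × Λ1 ≃ Ghat1) (e2 : ℚ × Λ2 ≃ Ghat2)
    (he1 : ∀ p q : ℚ × Λ1,
      e1 p * e1 q = e1 (p.1 + q.1 + ((B1 p.2 q.2 : ℤ) : ℚ), p.2 + q.2))
    (he2 : ∀ p q : ℚ × Λ2,
      e2 p * e2 q = e2 (p.1 + q.1 + ((B2 p.2 q.2 : ℤ) : ℚ), p.2 + q.2))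
    (lam1 : Ghat1) (hlam1 : lam1 = e1 (1, 0))
    (lam2 : Ghat2) (hlam2 : lam2 = e2 (1, 0))
    (γ1 : Fin (2 * k) → Ghat1) (hγ1 : ∀ i, γ1 i = e1 (-(1/2 : ℚ), b1 i))
    (γ2 : Fin (2 * k) → Ghat2) (hγ2 : ∀ i, γ2 i = e2 (-(1/2 : ℚ), b2 i))
    (G1 : Subgroup Ghat1) (hG1 : G1 = Subgroup.closure ({lam1} ∪ Set.range γ1))
    (G2 : Subgroup Ghat2) (hG2 : G2 = Subgroup.closure ({lam2} ∪ Set.range γ2))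
    (hlam1G : lam1 ∈ G1) (hγ1G : ∀ i, γ1 i ∈ G1)
    (hlam2G : lam2 ∈ G2) (hγ2G : ∀ i, γ2 i ∈ G2)
    -- the homomorphisms `Υₜ` to `G_{ℤ/2}(Zₜ) = (ℤ/2) × Λₜ`
    (Υ1 : G1 →* Multiplicative (ZMod 2 × Λ1))
    (Υ2 : G2 →* Multiplicative (ZMod 2 × Λ2))
    (hΥ1lam : Υ1 ⟨lam1, hlam1G⟩ = Multiplicative.ofAdd ((1, 0) : ZMod 2 × Λ1))
    (hΥ1γ : ∀ i, Υ1 ⟨γ1 i, hγ1G i⟩ = Multiplicative.ofAdd ((0, b1 i) : ZMod 2 × Λ1))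
    (hΥ2lam : Υ2 ⟨lam2, hlam2G⟩ = Multiplicative.ofAdd ((1, 0) : ZMod 2 × Λ2))
    (hΥ2γ : ∀ i, Υ2 ⟨γ2 i, hγ2G i⟩ = Multiplicative.ofAdd ((0, b2 i) : ZMod 2 × Λ2))
    -- the isomorphism `φ` with `φ(λ) = λ`
    (φ : G1 ≃* G2) (hφlam : φ ⟨lam1, hlam1G⟩ = ⟨lam2, hlam2G⟩) :
    -- (1) `φ` descends to an isomorphism `φ̄` of the `G_{ℤ/2}`'s
    (∃ φbar : ZMod 2 × Λ1 ≃+ ZMod 2 × Λ2,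
      ∀ x : G1, Multiplicative.toAdd (Υ2 (φ x)) = φbar (Multiplicative.toAdd (Υ1 x))) ∧
    -- (2) `φ` is determined, up to inner automorphisms, by the induced map
    (∀ φ' : G1 ≃* G2, φ' ⟨lam1, hlam1G⟩ = ⟨lam2, hlam2G⟩ →
      (∀ x : G1, Υ2 (φ x) = Υ2 (φ' x)) →
      ∃ g : G2, ∀ x : G1, φ' x = g * φ x * g⁻¹) :=
  statement17_general k b1 b2 B1 B2 skew2 unimod2 e1 e2 he1 he2 lam1 hlam1 lam2 hlam2 γ1 hγ1 γ2 hγ2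
    G1 hG1 G2 hG2 hlam1G hγ1G hlam2G hγ2G Υ1 Υ2 hΥ1lam hΥ1γ hΥ2lam hΥ2γ φ hφlam
end

section
/- Let A be a differential algebra over F2 graded by a group G with distinguished central element lambda, let M be a type D structure over A graded by a left G-set S, and let n = gcd{ m in N : lambda^m·s = s for some s in S } (with n = 0 if the action of lambda on S is free). Then: (1) for each triple (x, a, y) in the coefficient algebra Coeff(M), the integer k with lambda^k·gr(x) = gr(a)·gr(y) is well defined modulo n, so gr(x,a,y) := k mod n defines a canonical Z/n-grading on the differential algebra Coeff(M); and (2) with this grading, if a·y appears in ∂x (i.e. a ⊗ y occurs in delta^1(x)), then gr(x, a, y) = -1. -/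
/-!
Statement 19: Let `A` be a differential algebra over `𝔽₂`, graded by a group
`G` with distinguished central element `λ`, based with basic idempotents
`I i`.  Let `M` be a type `D` structure over `A` (here presented, as one may,
by its finitely many generators `X`, their idempotents, and the structure
coefficients `δ x y ∈ A` of the map `δ¹`, subject to the type `D` structure
equation), graded by a left `G`-set `S`, and let
`n = gcd { m ∈ ℕ : λ^m·s = s for some s ∈ S }` (so `n = 0` if the `λ`-action
is free).  Then:
(1) for each triple `(x, a, y)` in the coefficient algebra `Coeff(M)` the
    integer `k` with `λ^k • gr x = gr a • gr y` is well defined modulo `n`,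
    and the resulting `ℤ/n`-grading makes `Coeff(M)` a graded differential
    algebra (it is multiplicative and the differential drops it by one); and
(2) with this grading, if `a·y` appears in `∂x` then `gr (x, a, y) = -1`.
-/

theorem statement19
    -- the grading group with its distinguished central element
    {G : Type*} [Group G] (lam : G) (hcentral : ∀ g : G, lam * g = g * lam)
    -- the based differential algebra over 𝔽₂
    {A : Type*} [Ring A] [Algebra (ZMod 2) A]
    (d : A →ₗ[ZMod 2] A) (hdd : ∀ a, d (d a) = 0)
    (hdmul : ∀ a b, d (a * b) = d a * b + a * d b)
    {ι : Type*} [Fintype ι] (I : ι → A)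
    (hidem : ∀ i, I i * I i = I i)
    (horth : ∀ i j, i ≠ j → I i * I j = 0)
    (hsum : ∑ i, I i = 1)
    -- the grading of `A` by `G` (on its homogeneous elements)
    (Homog : Set A) (grA : A → G)
    (hgr_mul : ∀ a ∈ Homog, ∀ b ∈ Homog, a * b ≠ 0 →
      a * b ∈ Homog ∧ grA (a * b) = grA a * grA b)
    (hgr_d : ∀ a ∈ Homog, d a ≠ 0 → d a ∈ Homog ∧ grA (d a) = lam⁻¹ * grA a)
    -- the type `D` structure `M`, via its structure coefficients
    {X : Type*} [Fintype X] (idx : X → ι) (δ : X → X → A)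
    (hδidem : ∀ x y, I (idx x) * δ x y * I (idx y) = δ x y)
    (hδhomog : ∀ x y, δ x y ≠ 0 → δ x y ∈ Homog)
    (hstruct : ∀ x z, d (δ x z) + ∑ y, δ x y * δ y z = 0)
    -- the grading of `M` by a left `G`-set `S`
    {S : Type*} [MulAction G S] (gr : X → S)
    (hδgr : ∀ x y, δ x y ≠ 0 → grA (δ x y) • gr y = lam⁻¹ • gr x)
    -- `n` is the gcd of the natural numbers `m` such that `λ^m` has a fixed
    -- point in `S` (so `n = 0` when the action of `λ` on `S` is free)
    (n : ℕ)
    (hn : ∀ d' : ℕ, d' ∣ n ↔ ∀ m : ℕ, 0 < m → (∃ s : S, lam ^ m • s = s) → d' ∣ m) :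
    -- (1) the exponent `k` is well defined modulo `n` …
    (∀ (x y : X) (a : A) (k k' : ℤ), I (idx x) * a * I (idx y) = a →
        lam ^ k • gr x = grA a • gr y → lam ^ k' • gr x = grA a • gr y →
        (k : ZMod n) = (k' : ZMod n)) ∧
    -- … and defines a grading of the differential algebra `Coeff(M)`:
    -- it is multiplicative on products of composable triples …
    (∀ (x y z : X) (a b : A) (k l : ℤ),
        I (idx x) * a * I (idx y) = a → I (idx y) * b * I (idx z) = b →
        a ∈ Homog → b ∈ Homog → a * b ≠ 0 →
        lam ^ k • gr x = grA a • gr y → lam ^ l • gr y = grA b • gr z →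
        lam ^ (k + l) • gr x = grA (a * b) • gr z) ∧
    -- … and the differential `(x, a, y) ↦ (x, da, y)` drops it by one
    (∀ (x y : X) (a : A) (k : ℤ),
        I (idx x) * a * I (idx y) = a → a ∈ Homog → d a ≠ 0 →
        lam ^ k • gr x = grA a • gr y →
        lam ^ (k - 1) • gr x = grA (d a) • gr y) ∧
    -- (2) coefficients of the differential have grading `-1`
    (∀ (x y : X) (k : ℤ), δ x y ≠ 0 →
        lam ^ k • gr x = grA (δ x y) • gr y →
        (k : ZMod n) = (-1 : ZMod n)) := by

  have hcenz : ∀ (k : ℤ) (g : G), lam ^ k * g = g * lam ^ k := by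
    intro k g
    have h : lam ∈ Subgroup.center G :=
      Subgroup.mem_center_iff.mpr fun g' => (hcentral g').symm
    have h2 := (Subgroup.center G).zpow_mem h k
    exact ((Subgroup.mem_center_iff.mp h2) g).symm
  have hfixn : ∀ m : ℕ, 0 < m → (∃ s : S, lam ^ m • s = s) → n ∣ m :=
    (hn n).1 dvd_rfl
  have key : ∀ (k k' : ℤ) (s t : S), lam ^ k • s = t → lam ^ k' • s = t →
      (k : ZMod n) = (k' : ZMod n) := by
    intro k k' s t h1 h2
    have hfix : lam ^ (k - k') • s = s := by
      rw [sub_eq_neg_add, zpow_add, mul_smul, h1, ← h2, zpow_neg, inv_smul_smul]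
    have hd : (n : ℤ) ∣ (k - k') := by
      rcases eq_or_ne k k' with h | h
      · simp [h]
      · have he : k - k' ≠ 0 := sub_ne_zero.mpr h
        have hneg : ∀ g : ℤ, lam ^ g • s = s → lam ^ (-g) • s = s := by
          intro g hg
          conv_lhs => rw [← hg]
          rw [zpow_neg, inv_smul_smul]
        have habs : lam ^ ((k - k').natAbs : ℤ) • s = s := by
          rcases Int.natAbs_eq (k - k') with h' | h'
          · rw [← h']; exact hfix
          · have := hneg _ hfix
            rwa [h', neg_neg] at this
        have hnat : lam ^ (k - k').natAbs • s = s := by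
          rwa [zpow_natCast] at habs
        have hdvd : n ∣ (k - k').natAbs :=
          hfixn _ (Int.natAbs_pos.mpr he) ⟨s, hnat⟩
        have : ((n : ℤ)).natAbs ∣ (k - k').natAbs := by simpa using hdvd
        exact Int.natAbs_dvd_natAbs.mp this
    have hz : ((k - k' : ℤ) : ZMod n) = 0 :=
      (ZMod.intCast_zmod_eq_zero_iff_dvd _ _).mpr hd
    push_cast at hz
    exact sub_eq_zero.mp hz
  refine ⟨?_, ?_, ?_, ?_⟩
  · intro x y a k k' _ h1 h2
    exact key k k' (gr x) (grA a • gr y) h1 h2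
  · intro x y z a b k l _ _ ha hb hab hk hl
    rw [add_comm, zpow_add, mul_smul, hk, ← mul_smul, hcenz l (grA a),
      mul_smul, hl, ← mul_smul, ← (hgr_mul a ha b hb hab).2]
  · intro x y a k _ ha hda hk
    rw [sub_eq_neg_add, zpow_add, mul_smul, hk, zpow_neg_one, ← mul_smul,
      ← (hgr_d a ha hda).2]
  · intro x y k hne hk
    have h2 : lam ^ (-1 : ℤ) • gr x = grA (δ x y) • gr y := by
      rw [zpow_neg_one, ← hδgr x y hne]
    have := key k (-1) (gr x) (grA (δ x y) • gr y) hk h2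
    rw [this]; push_cast; ring
end
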